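/- Let ā ∈ R^K, Ā a (p-1)×K matrix of full column rank, Σ_U a (p-1)×(p-1) positive definite matrix, Ḡ := I_K + Ā'Σ_U^{-1}Ā, and α* := Σ_U^{-1} Ā Ḡ^{-1} ā. Then ‖α*‖₂² ≤ (ā' Ḡ^{-1} ā) / λ_min(Σ_U), where λ_min(Σ_U) is the smallest eigenvalue of Σ_U. -/

import Mathlib

/-! With `x = Ḡ⁻¹ ā` and `w = Σ_U⁻¹ Ā x`, the identity `Ā' Σ_U⁻¹ Ā = Ḡ - I` gives
`w' Σ_U w = x' Ā' Σ_U⁻¹ Ā x = x' ā - ‖x‖² ≤ ā' x`, while diagonalising `Σ_U` gives the Rayleigh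
bound `λ_min(Σ_U) ‖w‖² ≤ w' Σ_U w`. -/

open Matrix

namespace Matrix

variable {m n : Type*} [Fintype m] [Fintype n]

lemma mulVec_inv_mulVec {R : Type*} [CommRing R] [DecidableEq n] {S : Matrix n n R}
    (hS : IsUnit S.det) (v : n → R) : S *ᵥ (S⁻¹ *ᵥ v) = v := by
  rw [mulVec_mulVec, mul_nonsing_inv S hS, one_mulVec]

lemma IsHermitian.iInf_eigenvalues_mul_dotProduct_self_le [DecidableEq n]
    {S : Matrix n n ℝ} (hS : S.IsHermitian) (w : n → ℝ) :
    (⨅ i, hS.eigenvalues i) * (w ⬝ᵥ w) ≤ w ⬝ᵥ (S *ᵥ w) := by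
  set U : Matrix n n ℝ := (hS.eigenvectorUnitary : Matrix n n ℝ)
  set y := Uᵀ *ᵥ w
  have hUUt : U * Uᵀ = 1 := Unitary.mul_star_self_of_mem hS.eigenvectorUnitary.2
  have hS_eq : S = U * diagonal hS.eigenvalues * Uᵀ := by
    conv_lhs => rw [hS.spectral_theorem]
    simp [U, star_eq_conjTranspose, conjTranspose_eq_transpose_of_trivial]
  have hnorm : w ⬝ᵥ w = y ⬝ᵥ y := by
    rw [dotProduct_mulVec, ← mulVec_transpose, transpose_transpose, mulVec_mulVec, hUUt,
      one_mulVec, dotProduct_comm]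
  have hquad : w ⬝ᵥ (S *ᵥ w) = ∑ i, hS.eigenvalues i * (y i * y i) := by
    conv_lhs => rw [hS_eq]
    rw [← mulVec_mulVec, ← mulVec_mulVec, dotProduct_mulVec, ← mulVec_transpose]
    simp only [dotProduct, mulVec_diagonal, y]
    exact Finset.sum_congr rfl fun i _ ↦ by ring
  have hmin : ∀ i, (⨅ j, hS.eigenvalues j) ≤ hS.eigenvalues i :=
    ciInf_le (Set.finite_range _).bddBelow
  rw [hquad, hnorm, dotProduct, Finset.mul_sum]
  exact Finset.sum_le_sum fun i _ ↦ mul_le_mul_of_nonneg_right (hmin i) (mul_self_nonneg _)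

lemma PosDef.iInf_eigenvalues_pos [DecidableEq n] [Nonempty n] {S : Matrix n n ℝ}
    (hS : S.PosDef) : 0 < ⨅ i, hS.1.eigenvalues i := by
  obtain ⟨i, hi⟩ := exists_eq_ciInf_of_finite (f := hS.1.eigenvalues)
  exact hi ▸ hS.eigenvalues_pos i

lemma dotProduct_inv_mulVec_eq_of_mulVec_eq {R : Type*} [CommRing R] [DecidableEq m]
    [DecidableEq n] {A : Matrix m n R} {S : Matrix m m R} {x a : n → R}
    (hx : (1 + Aᵀ * S⁻¹ * A) *ᵥ x = a) :
    (A *ᵥ x) ⬝ᵥ (S⁻¹ *ᵥ (A *ᵥ x)) = x ⬝ᵥ a - x ⬝ᵥ x := by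
  have hM : (Aᵀ * S⁻¹ * A) *ᵥ x = a - x := by
    rw [← hx, add_mulVec, one_mulVec, add_sub_cancel_left]
  rw [← dotProduct_sub, ← hM, ← mulVec_mulVec, ← mulVec_mulVec, dotProduct_mulVec x,
    vecMul_transpose]

end Matrix

theorem sq_norm_alpha_le_general {n K : ℕ}
    (Ab : Matrix (Fin n) (Fin K) ℝ)
    (SU : Matrix (Fin n) (Fin n) ℝ) (hU : SU.PosDef) (a : Fin K → ℝ) :
    ∑ i, (SU⁻¹ *ᵥ (Ab *ᵥ ((1 + Abᵀ * SU⁻¹ * Ab)⁻¹ *ᵥ a))) i ^ 2 ≤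
      (a ⬝ᵥ ((1 + Abᵀ * SU⁻¹ * Ab)⁻¹ *ᵥ a)) / (⨅ i, hU.1.eigenvalues i) := by
  set G := 1 + Abᵀ * SU⁻¹ * Ab
  set x := G⁻¹ *ᵥ a
  set w := SU⁻¹ *ᵥ (Ab *ᵥ x)
  have hG : G.PosDef := PosDef.one.add_posSemidef <| by
    simpa using hU.inv.posSemidef.conjTranspose_mul_mul_same Ab
  have hquad : w ⬝ᵥ (SU *ᵥ w) = x ⬝ᵥ a - x ⬝ᵥ x := by
    rw [mulVec_inv_mulVec hU.det_pos.ne'.isUnit, dotProduct_comm]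
    exact dotProduct_inv_mulVec_eq_of_mulVec_eq (mulVec_inv_mulVec hG.det_pos.ne'.isUnit a)
  rcases isEmpty_or_nonempty (Fin n) with _ | _
  · simp -- the infimum over an empty index set is `0`, and so is the quotient
  rw [le_div_iff₀ hU.iInf_eigenvalues_pos]
  calc (∑ i, w i ^ 2) * ⨅ i, hU.1.eigenvalues i = (⨅ i, hU.1.eigenvalues i) * (w ⬝ᵥ w) := by
        simp only [dotProduct, sq, mul_comm]
    _ ≤ w ⬝ᵥ (SU *ᵥ w) := hU.1.iInf_eigenvalues_mul_dotProduct_self_le w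
    _ = x ⬝ᵥ a - x ⬝ᵥ x := hquad
    _ ≤ a ⬝ᵥ x := by
        rw [dotProduct_comm a]
        linarith [show 0 ≤ x ⬝ᵥ x by simpa using dotProduct_self_star_nonneg x]

/-- Bound on the squared ℓ² norm of α* = Σ_U⁻¹ Ā Ḡ⁻¹ ā:
‖α*‖₂² ≤ (ā' Ḡ⁻¹ ā) / λ_min(Σ_U). -/
theorem sq_norm_alpha_le {n K : ℕ}
    (Ab : Matrix (Fin n) (Fin K) ℝ) (hrank : Ab.rank = K)
    (SU : Matrix (Fin n) (Fin n) ℝ) (hU : SU.PosDef) (a : Fin K → ℝ) :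
    ∑ i, (SU⁻¹ *ᵥ (Ab *ᵥ ((1 + Abᵀ * SU⁻¹ * Ab)⁻¹ *ᵥ a))) i ^ 2 ≤
      (a ⬝ᵥ ((1 + Abᵀ * SU⁻¹ * Ab)⁻¹ *ᵥ a)) / (⨅ i, hU.1.eigenvalues i) :=
  sq_norm_alpha_le_general Ab SU hU a
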